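/- For every positive integer m, the group SL₂(ℤ[1/m]) is generated by the three matrices A = [[1,0],[1,1]], B = [[0,1],[-1,0]], and U = [[m,0],[0,1/m]]. -/

import Mathlib

/-- The subring ℤ[1/m] of ℚ. -/
def Zinv (m : ℕ) : Subring ℚ := Subring.closure {((m : ℚ))⁻¹}

lemma invMem (m : ℕ) : ((m : ℚ))⁻¹ ∈ Zinv m :=
  Subring.subset_closure (Set.mem_singleton _)

def matA (m : ℕ) : Matrix.SpecialLinearGroup (Fin 2) (Zinv m) :=
  ⟨!![1, 0; 1, 1], by simp [Matrix.det_fin_two_of]⟩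

def matQ (m : ℕ) : Matrix.SpecialLinearGroup (Fin 2) (Zinv m) :=
  ⟨!![1, ⟨-((m : ℚ))⁻¹, neg_mem (invMem m)⟩; 0, 1], by simp [Matrix.det_fin_two_of]⟩

def matB (m : ℕ) : Matrix.SpecialLinearGroup (Fin 2) (Zinv m) :=
  ⟨!![0, 1; -1, 0], by simp [Matrix.det_fin_two_of]⟩

def matU (m : ℕ) (hm : 0 < m) : Matrix.SpecialLinearGroup (Fin 2) (Zinv m) :=
  ⟨!![(m : Zinv m), 0; 0, ⟨((m : ℚ))⁻¹, invMem m⟩], by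
    have hm0 : (m : ℚ) ≠ 0 := Nat.cast_ne_zero.2 hm.ne'
    apply Subtype.ext
    simp [Matrix.det_fin_two_of, mul_inv_cancel₀ hm0]⟩


/-!
Conjugation by `U` divides the lower-left entry of `[[1,0],[x,1]]` by `m²`; starting from
powers of `A = [[1,0],[1,1]]`, these lower unipotent matrices therefore lie in `⟨A, B, U⟩` for
every `x ∈ ℤ[1/m]`, and conjugation by `B` gives the upper ones. Given `g`, multiply its first
column by a power `s` of `m` to get integers `(P, Q)`. Left multiplication by
`B · [[1,-t],[0,1]]` with `t = P / Q` turns them into `(Q, -(P % Q))`, so the Euclidean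
algorithm reaches `Q = 0`, and an upper triangular element of `SL₂` is a product of unipotent
matrices and `B⁻¹`.
-/

open Filter
open scoped MatrixGroups

namespace SL2

variable {R : Type*} [CommRing R]

def lower (x : R) : SL(2, R) := ⟨!![1, 0; x, 1], by simp [Matrix.det_fin_two_of]⟩

def upper (x : R) : SL(2, R) := ⟨!![1, x; 0, 1], by simp [Matrix.det_fin_two_of]⟩

variable (R) in
def weyl : SL(2, R) := ⟨!![0, 1; -1, 0], by simp [Matrix.det_fin_two_of]⟩

@[simp] lemma coe_lower (x : R) : (lower x : Matrix (Fin 2) (Fin 2) R) = !![1, 0; x, 1] := rfl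
@[simp] lemma coe_upper (x : R) : (upper x : Matrix (Fin 2) (Fin 2) R) = !![1, x; 0, 1] := rfl
@[simp] lemma coe_weyl : (weyl R : Matrix (Fin 2) (Fin 2) R) = !![0, 1; -1, 0] := rfl

lemma lower_add (x y : R) : lower (x + y) = lower x * lower y := by
  ext i j; fin_cases i <;> fin_cases j <;> simp

lemma lower_zero : lower (0 : R) = 1 := by
  ext i j; fin_cases i <;> fin_cases j <;> simp

lemma lower_intCast (n : ℤ) : lower (n : R) = lower 1 ^ n := by
  let φ : Multiplicative R →* SL(2, R) :=
    { toFun x := lower x.toAdd, map_one' := lower_zero, map_mul' x y := lower_add _ _ }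
  simpa [φ] using map_zpow φ (Multiplicative.ofAdd 1) n

lemma upper_eq_weyl_mul_lower_mul_inv (x : R) : upper x = weyl R * lower (-x) * (weyl R)⁻¹ := by
  rw [eq_mul_inv_iff_mul_eq]
  ext i j; fin_cases i <;> fin_cases j <;> simp

/- With `a * d = 1`, the first three factors and `(weyl R)⁻¹` multiply to `diag(a, d)`. -/
lemma eq_of_apply_one_zero_eq_zero (g : SL(2, R)) (h : g 1 0 = 0) :
    g = upper (g 0 0) * lower (-g 1 1) * upper (g 0 0) * (weyl R)⁻¹ *
      (upper (-(g 1 1 * g 0 1)))⁻¹ := by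
  have hdet : g 0 0 * g 1 1 = 1 := by
    have := g.det_coe
    rwa [Matrix.det_fin_two, h, mul_zero, sub_zero] at this
  rw [eq_mul_inv_iff_mul_eq, eq_mul_inv_iff_mul_eq]
  ext i j; fin_cases i <;> fin_cases j <;> simp [Matrix.mul_apply, Fin.sum_univ_two, h]
  all_goals grind

lemma weyl_mul_upper_mul_apply_zero_zero (x : R) (g : SL(2, R)) :
    (weyl R * upper x * g) 0 0 = g 1 0 := by
  simp [Matrix.mul_apply, Fin.sum_univ_two]

lemma weyl_mul_upper_mul_apply_one_zero (x : R) (g : SL(2, R)) :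
    (weyl R * upper x * g) 1 0 = -g 0 0 - x * g 1 0 := by
  simp [Matrix.mul_apply, Fin.sum_univ_two]
  ring

section Generation

variable {H : Subgroup SL(2, R)}

lemma upper_mem (hweyl : weyl R ∈ H) (hlower : ∀ x, lower x ∈ H) (x : R) : upper x ∈ H := by
  rw [upper_eq_weyl_mul_lower_mul_inv]
  exact mul_mem (mul_mem hweyl (hlower _)) (inv_mem hweyl)

lemma mem_of_apply_one_zero_eq_zero (hweyl : weyl R ∈ H) (hlower : ∀ x, lower x ∈ H)
    {g : SL(2, R)} (hg : g 1 0 = 0) : g ∈ H := by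
  have hupper := upper_mem hweyl hlower
  rw [eq_of_apply_one_zero_eq_zero g hg]
  exact mul_mem (mul_mem (mul_mem (mul_mem (hupper _) (hlower _)) (hupper _)) (inv_mem hweyl))
    (inv_mem (hupper _))

lemma mem_of_mul_eq_intCast (hweyl : weyl R ∈ H) (hlower : ∀ x, lower x ∈ H) {s : R}
    (hs : IsUnit s) (g : SL(2, R)) (P Q : ℤ) (hP : g 0 0 * s = P) (hQ : g 1 0 * s = Q) :
    g ∈ H := by
  induction hn : Q.natAbs using Nat.strong_induction_on generalizing g P Q with
  | _ n ih =>
  rcases eq_or_ne Q 0 with rfl | hQ0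
  · exact mem_of_apply_one_zero_eq_zero hweyl hlower (hs.mul_left_eq_zero.1 (by simpa using hQ))
  set g' := weyl R * upper (-((P / Q : ℤ) : R)) * g
  have hP' : g' 0 0 * s = Q := by rw [weyl_mul_upper_mul_apply_zero_zero, hQ]
  have hQ' : g' 1 0 * s = (-(P % Q) : ℤ) := by
    rw [weyl_mul_upper_mul_apply_one_zero, Int.emod_def]
    push_cast
    linear_combination -hP + ((P / Q : ℤ) : R) * hQ
  have hlt : (-(P % Q)).natAbs < n := by
    have := Int.emod_nonneg P hQ0
    have := Int.emod_lt_abs P hQ0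
    rw [Int.abs_eq_natAbs] at this
    rw [← hn]
    omega
  have hg' : g' ∈ H := ih _ hlt g' Q _ hP' hQ' rfl
  rw [← inv_mul_cancel_left (weyl R * upper (-((P / Q : ℤ) : R))) g]
  exact mul_mem (inv_mem (mul_mem hweyl (upper_mem hweyl hlower _))) hg'

end Generation

end SL2

namespace Zinv

variable {m : ℕ}

variable (m) in
def inv : Zinv m := ⟨(m : ℚ)⁻¹, invMem m⟩

lemma natCast_mul_inv (hm : m ≠ 0) : (m : Zinv m) * inv m = 1 :=
  Subtype.ext (by simp [inv, hm])

lemma isUnit_natCast (hm : m ≠ 0) : IsUnit (m : Zinv m) :=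
  IsUnit.of_mul_eq_one _ (natCast_mul_inv hm)

lemma exists_mul_pow_eq_intCast (x : Zinv m) :
    ∃ k : ℕ, ∃ n : ℤ, x * (m : Zinv m) ^ k = n := by
  obtain ⟨x, hx⟩ := x
  suffices ∃ k : ℕ, ∃ n : ℤ, x * (m : ℚ) ^ k = n by
    obtain ⟨k, n, h⟩ := this
    exact ⟨k, n, Subtype.ext (by simpa using h)⟩
  induction hx using Subring.closure_induction with
  | mem y hy =>
    rw [Set.mem_singleton_iff.1 hy]
    exact ⟨2, m, by push_cast; rw [sq, ← mul_assoc, inv_mul_mul_self]⟩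
  | zero => exact ⟨0, 0, by simp⟩
  | one => exact ⟨0, 1, by simp⟩
  | add y z _ _ hy hz =>
    obtain ⟨k, n, hk⟩ := hy
    obtain ⟨l, n', hl⟩ := hz
    exact ⟨k + l, n * m ^ l + n' * m ^ k, by
      push_cast; linear_combination (m : ℚ) ^ l * hk + (m : ℚ) ^ k * hl⟩
  | neg y _ hy =>
    obtain ⟨k, n, hk⟩ := hy
    exact ⟨k, -n, by push_cast; linear_combination -hk⟩
  | mul y z _ _ hy hz =>
    obtain ⟨k, n, hk⟩ := hy
    obtain ⟨l, n', hl⟩ := hz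
    exact ⟨k + l, n * n', by push_cast; linear_combination z * (m : ℚ) ^ l * hk + n * hl⟩

lemma eventually_mul_pow_eq_intCast (x : Zinv m) :
    ∀ᶠ k in atTop, ∃ n : ℤ, x * (m : Zinv m) ^ k = n := by
  obtain ⟨k, n, hk⟩ := exists_mul_pow_eq_intCast x
  filter_upwards [eventually_ge_atTop k] with l hl
  obtain ⟨j, rfl⟩ := Nat.exists_eq_add_of_le hl
  exact ⟨n * m ^ j, by rw [pow_add, ← mul_assoc, hk]; push_cast; rfl⟩

lemma matA_eq : matA m = SL2.lower 1 := rfl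

lemma matB_eq : matB m = SL2.weyl (Zinv m) := rfl

lemma coe_matU (hm : 0 < m) :
    (matU m hm : Matrix (Fin 2) (Fin 2) (Zinv m)) = !![(m : Zinv m), 0; 0, inv m] := rfl

lemma lower_mul_matU (hm : 0 < m) (x : Zinv m) :
    SL2.lower x * matU m hm = matU m hm * SL2.lower (m ^ 2 * x) := by
  have h : (m : ℚ) * (inv m : ℚ) = 1 := by simp [inv, hm.ne']
  ext i j; fin_cases i <;> fin_cases j <;> simp [coe_matU]
  linear_combination -(x * m : ℚ) * h

lemma lower_mem_closure_of_mul_pow_eq_intCast (hm : 0 < m) (k : ℕ) :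
    ∀ (x : Zinv m) (n : ℤ), x * (m : Zinv m) ^ (2 * k) = n →
      SL2.lower x ∈ Subgroup.closure {matA m, matB m, matU m hm} := by
  induction k with
  | zero =>
    rintro x n hx
    rw [pow_zero, mul_one] at hx
    rw [hx, SL2.lower_intCast, ← matA_eq]
    exact zpow_mem (Subgroup.subset_closure (by simp)) n
  | succ k ih =>
    rintro x n hx
    have hU : matU m hm ∈ Subgroup.closure {matA m, matB m, matU m hm} :=
      Subgroup.subset_closure (by simp)
    rw [← mul_inv_cancel_right (SL2.lower x) (matU m hm), lower_mul_matU]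
    refine mul_mem (mul_mem hU (ih _ n ?_)) (inv_mem hU)
    rw [← hx]
    ring

lemma lower_mem_closure (hm : 0 < m) (x : Zinv m) :
    SL2.lower x ∈ Subgroup.closure {matA m, matB m, matU m hm} := by
  obtain ⟨k, hk⟩ := eventually_atTop.1 (eventually_mul_pow_eq_intCast x)
  obtain ⟨n, hn⟩ := hk (2 * k) (by omega)
  exact lower_mem_closure_of_mul_pow_eq_intCast hm k x n hn

end Zinv

theorem stmt_15 (m : ℕ) (hm : 0 < m) :
    Subgroup.closure {matA m, matB m, matU m hm} =
      (⊤ : Subgroup (Matrix.SpecialLinearGroup (Fin 2) (Zinv m))) := by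
  refine eq_top_iff.2 fun g _ ↦ ?_
  obtain ⟨k, ⟨P, hP⟩, ⟨Q, hQ⟩⟩ := ((Zinv.eventually_mul_pow_eq_intCast (g 0 0)).and
    (Zinv.eventually_mul_pow_eq_intCast (g 1 0))).exists
  have hB : SL2.weyl (Zinv m) ∈ Subgroup.closure {matA m, matB m, matU m hm} :=
    Subgroup.subset_closure (by simp [Zinv.matB_eq])
  exact SL2.mem_of_mul_eq_intCast hB (Zinv.lower_mem_closure hm)
    ((Zinv.isUnit_natCast hm.ne').pow k) g P Q hP hQ
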